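/- For real h₁, h₂ ≥ 0 and ψ ∈ ℝ, the symmetrized sum I₀(|h₁ + h₂e^{iψ}|) + I₀(|h₁ − h₂e^{iψ}|) equals ∑_{n≥0} (1/(4^n (n!)²)) · ∑_{k : 2k ≤ n} C(n,2k)·2^{2k+1}·cos^{2k}ψ · (h₁² + h₂²)^{n−2k}·(h₁h₂)^{2k}; in particular it is a sum with nonnegative coefficients of products of powers of (h₁² + h₂²) and (h₁h₂)². -/

import Mathlib

open Real Complex

/-- Modified Bessel function of the first kind of order 0. -/
noncomputable def besselI0 (x : ℝ) : ℝ :=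
  ∑' n : ℕ, (x / 2) ^ (2 * n) / ((Nat.factorial n : ℝ)) ^ 2

lemma summable_besselI0 (x : ℝ) :
    Summable (fun n : ℕ => (x / 2) ^ (2 * n) / ((Nat.factorial n : ℝ)) ^ 2) := by
  refine Summable.of_nonneg_of_le (fun n => ?_) (fun n => ?_)
    (Real.summable_pow_div_factorial ((x / 2) ^ 2))
  · have := (even_two_mul n).pow_nonneg (x / 2)
    positivity
  · rw [pow_mul]
    apply div_le_div_of_nonneg_left ?_ ?_ ?_
    · positivity
    · exact_mod_cast n.factorial_pos
    · have h1 : (1 : ℝ) ≤ (Nat.factorial n : ℝ) := by exact_mod_cast n.factorial_pos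
      nlinarith

lemma key_binom (a b : ℝ) (n : ℕ) :
    (a + b) ^ n + (a - b) ^ n =
      ∑ k ∈ Finset.range (n / 2 + 1),
        2 * (n.choose (2 * k) : ℝ) * a ^ (n - 2 * k) * b ^ (2 * k) := by
  have h1 : (a + b) ^ n = ∑ k ∈ Finset.range (n + 1),
      b ^ k * a ^ (n - k) * (n.choose k : ℝ) := by
    rw [add_comm a b, add_pow]
  have h2 : (a - b) ^ n = ∑ k ∈ Finset.range (n + 1),
      (-b) ^ k * a ^ (n - k) * (n.choose k : ℝ) := by
    rw [sub_eq_add_neg, add_comm a (-b), add_pow]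
  rw [h1, h2, ← Finset.sum_add_distrib]
  have himg : (Finset.range (n + 1)).filter (fun k => Even k)
      = (Finset.range (n / 2 + 1)).image (fun j => 2 * j) := by
    ext k
    simp only [Finset.mem_filter, Finset.mem_range, Finset.mem_image, Nat.lt_succ_iff]
    constructor
    · rintro ⟨hk, j, rfl⟩
      exact ⟨j, Nat.le_div_iff_mul_le (by norm_num) |>.2 (by omega), by ring⟩
    · rintro ⟨j, hj, rfl⟩
      have := Nat.le_div_iff_mul_le (k := 2) (by norm_num) |>.1 hj
      exact ⟨by omega, j, by ring⟩
  have hvanish : ∀ k ∈ Finset.range (n + 1),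
      (b ^ k * a ^ (n - k) * (n.choose k : ℝ) + (-b) ^ k * a ^ (n - k) * (n.choose k : ℝ)) ≠ 0
      → Even k := by
    intro k _ hne
    by_contra hodd
    rw [Nat.not_even_iff_odd] at hodd
    rw [hodd.neg_pow] at hne
    simp at hne
  rw [← Finset.sum_filter_of_ne hvanish, himg,
    Finset.sum_image (by intro x _ y _ h; exact Nat.eq_of_mul_eq_mul_left (by norm_num) h)]
  apply Finset.sum_congr rfl
  intro j _
  rw [(even_two_mul j).neg_pow]
  ring

lemma normSq_pm (h₁ h₂ ψ : ℝ) :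
    ‖(h₁ : ℂ) + (h₂ : ℂ) * Complex.exp (Complex.I * ψ)‖ ^ 2
      = (h₁ ^ 2 + h₂ ^ 2) + 2 * h₁ * h₂ * Real.cos ψ ∧
    ‖(h₁ : ℂ) - (h₂ : ℂ) * Complex.exp (Complex.I * ψ)‖ ^ 2
      = (h₁ ^ 2 + h₂ ^ 2) - 2 * h₁ * h₂ * Real.cos ψ := by
  rw [mul_comm Complex.I (ψ : ℂ)]
  constructor <;>
  · rw [Complex.sq_norm, Complex.normSq_apply]
    simp [Complex.exp_ofReal_mul_I_re, Complex.exp_ofReal_mul_I_im]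
    nlinarith [Real.sin_sq_add_cos_sq ψ]

theorem besselI0_symmetrized_sum_conic
    (h₁ h₂ ψ : ℝ) (hh₁ : 0 ≤ h₁) (hh₂ : 0 ≤ h₂) :
    besselI0 ‖(h₁ : ℂ) + (h₂ : ℂ) * Complex.exp (Complex.I * ψ)‖
      + besselI0 ‖(h₁ : ℂ) - (h₂ : ℂ) * Complex.exp (Complex.I * ψ)‖ =
    ∑' n : ℕ, (1 / (4 ^ n * ((Nat.factorial n : ℝ)) ^ 2)) *
      ∑ k ∈ Finset.range (n / 2 + 1),
        (n.choose (2 * k) : ℝ) * 2 ^ (2 * k + 1) * Real.cos ψ ^ (2 * k)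
          * (h₁ ^ 2 + h₂ ^ 2) ^ (n - 2 * k) * (h₁ * h₂) ^ (2 * k) := by
  obtain ⟨hu, hv⟩ := normSq_pm h₁ h₂ ψ
  set u := ‖(h₁ : ℂ) + (h₂ : ℂ) * Complex.exp (Complex.I * ψ)‖
  set v := ‖(h₁ : ℂ) - (h₂ : ℂ) * Complex.exp (Complex.I * ψ)‖
  unfold besselI0
  rw [← Summable.tsum_add (summable_besselI0 u) (summable_besselI0 v)]
  apply tsum_congr
  intro n
  have hfac : (0:ℝ) < (Nat.factorial n : ℝ) := by exact_mod_cast n.factorial_pos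
  have hterm : ∀ w : ℝ, (w / 2) ^ (2 * n) = (w ^ 2) ^ n / 4 ^ n := by
    intro w
    rw [div_pow, pow_mul, pow_mul]
    norm_num
  rw [hterm u, hterm v, hu, hv, ← add_div, ← add_div, div_div]
  set a := h₁ ^ 2 + h₂ ^ 2
  set b := 2 * h₁ * h₂ * Real.cos ψ
  rw [key_binom a b n, Finset.mul_sum, Finset.sum_div]
  apply Finset.sum_congr rfl
  intro k _
  rw [one_div, inv_mul_eq_div]
  congr 1
  simp only [b]
  ring
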